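/- arXiv:2505.03814 — 2 statements merged into one kernel-verified Lean document; each statement's English description precedes it below -/
import Mathlib

section
/- Adaptive Hoeffding inequality: Let X_1, X_2, ... be an i.i.d. (or independent) sequence of random variables with 0 ≤ X_i ≤ 1 almost surely, S_n = Σ_{i=1}^n (X_i − E X_i), and ε_n = √((2 ln(log₂(n) + 1) + ln(4/δ)) / n) for δ ∈ (0,1). Then P(∃ n ≥ 1 : S_n / n ≥ ε_n) ≤ δ/2. -/
/-!
Split the times `n ≥ 1` into dyadic blocks `2 ^ k ≤ n < 2 ^ (k + 1)`. On block `k` the threshold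
`n ε_n` is at least `√(2 ^ k L_k)` with `L_k = 2 log (k + 1) + log (4 / δ)`. Hoeffding's lemma makes
the centred summands `1/4`-sub-Gaussian, so `exp (t S_n)` is a nonnegative submartingale whose
mean at time `2 ^ (k + 1)` is at most `exp (2 ^ (k + 1) t ^ 2 / 8)`; Doob's maximal inequality and
the optimal choice of `t` bound the probability that the walk crosses `√(2 ^ k L_k)` inside block
`k` by `exp (-L_k) = δ / (4 (k + 1) ^ 2)`. Summing over `k` with `∑ 1 / (k + 1) ^ 2 = π ^ 2 / 6 ≤ 2`
gives `δ / 2`.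
-/

open MeasureTheory ProbabilityTheory Real Finset
open scoped NNReal

section

variable {Ω : Type*} {mΩ : MeasurableSpace Ω} {μ : Measure Ω}

namespace ProbabilityTheory.iIndepFun

variable {Z : ℕ → Ω → ℝ}

lemma integrable_prod_range (h_indep : iIndepFun Z μ) (hZ : ∀ i, Measurable (Z i))
    (h_int : ∀ i, Integrable (Z i) μ) (n : ℕ) : Integrable (∏ i ∈ range n, Z i) μ := by
  have := h_indep.isProbabilityMeasure
  induction n with
  | zero => exact integrable_const (1 : ℝ)
  | succ n ih =>
    rw [prod_range_succ]
    exact (h_indep.indepFun_prod_range_succ hZ n).integrable_mul ih (h_int n)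

theorem submartingale_prod_range_succ (h_indep : iIndepFun Z μ)
    (hZ : ∀ i, StronglyMeasurable (Z i)) (h_int : ∀ i, Integrable (Z i) μ)
    (h_nonneg : ∀ i, 0 ≤ Z i) (h_one : ∀ i, 1 ≤ μ[Z i]) :
    Submartingale (fun n ↦ ∏ i ∈ range (n + 1), Z i) (Filtration.natural Z hZ) μ := by
  have := h_indep.isProbabilityMeasure
  have h_adapted : StronglyAdapted (Filtration.natural Z hZ)
      (fun n ↦ ∏ i ∈ range (n + 1), Z i) := fun n ↦
    Finset.stronglyMeasurable_prod _ fun i hi ↦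
      Filtration.stronglyAdapted_natural hZ i |>.mono
        (Filtration.mono _ (Nat.lt_succ_iff.mp (mem_range.mp hi)))
  have h_int_prod := h_indep.integrable_prod_range (fun i ↦ (hZ i).measurable) h_int
  refine submartingale_nat h_adapted (fun n ↦ h_int_prod _) fun n ↦ ?_
  have h_cond : μ[∏ i ∈ range (n + 1 + 1), Z i | Filtration.natural Z hZ n]
      =ᵐ[μ] (∏ i ∈ range (n + 1), Z i) * fun _ ↦ μ[Z (n + 1)] := by
    rw [prod_range_succ _ (n + 1)]
    refine (condExp_mul_of_stronglyMeasurable_left (h_adapted n) ?_ (h_int _)).trans ?_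
    · rw [← prod_range_succ]
      exact h_int_prod _
    · exact (h_indep.condExp_natural_ae_eq_of_lt hZ n.lt_succ_self).mul_left
  filter_upwards [h_cond] with ω hω
  rw [hω, Pi.mul_apply, prod_apply]
  exact le_mul_of_one_le_right (prod_nonneg fun i _ ↦ h_nonneg i ω) (h_one _)

end ProbabilityTheory.iIndepFun

namespace ProbabilityTheory.HasSubgaussianMGF

variable [IsProbabilityMeasure μ] {X : Ω → ℝ} {c : ℝ≥0}

-- `mgf X μ` touches `t ↦ exp (c * t ^ 2 / 2)` from below at `t = 0`, so their slopes agree there.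
lemma integral_eq_zero (h : HasSubgaussianMGF X c μ) : μ[X] = 0 := by
  have h_mgf : HasDerivAt (mgf X μ) μ[X] 0 := by
    simpa using hasDerivAt_mgf (by simp [h.integrableExpSet_eq_univ] : (0 : ℝ) ∈ _)
  have h_bound : HasDerivAt (fun t : ℝ ↦ exp (c * t ^ 2 / 2)) 0 0 := by
    simpa using ((hasDerivAt_pow 2 (0 : ℝ)).const_mul (c : ℝ)).div_const 2 |>.exp
  have h_min : IsLocalMin (fun t ↦ exp (c * t ^ 2 / 2) - mgf X μ t) 0 :=
    Filter.Eventually.of_forall fun t ↦ by simpa using h.mgf_le t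
  simpa using (h_min.hasDerivAt_eq_zero (h_bound.sub h_mgf)).symm

lemma one_le_mgf (h : HasSubgaussianMGF X c μ) (t : ℝ) : 1 ≤ mgf X μ t := by
  have h_lin : Integrable (fun ω ↦ 1 + t * X ω) μ :=
    (integrable_const 1).add (h.integrable.const_mul t)
  calc (1 : ℝ) = μ[fun ω ↦ 1 + t * X ω] := by
        rw [integral_add (integrable_const 1) (h.integrable.const_mul t), integral_const_mul,
          h.integral_eq_zero]
        simp
    _ ≤ μ[fun ω ↦ exp (t * X ω)] :=
        integral_mono h_lin (h.integrable_exp_mul t) fun ω ↦ by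
          linarith [add_one_le_exp (t * X ω)]
    _ = mgf X μ t := rfl

end ProbabilityTheory.HasSubgaussianMGF

lemma MeasureTheory.Submartingale.measure_exists_le_le_integral_div [IsFiniteMeasure μ]
    {𝒢 : Filtration ℕ mΩ} {f : ℕ → Ω → ℝ} (hsub : Submartingale f 𝒢 μ) (hnonneg : 0 ≤ f)
    {ε : ℝ} (hε : 0 < ε) (N : ℕ) :
    μ {ω | ∃ n ≤ N, ε ≤ f n ω} ≤ ENNReal.ofReal (μ[f N] / ε) := by
  set A := {ω | (ε.toNNReal : ℝ) ≤ (range (N + 1)).sup' nonempty_range_add_one fun k ↦ f k ω}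
  have h_sub : {ω | ∃ n ≤ N, ε ≤ f n ω} ⊆ A := by
    rintro ω ⟨n, hn, h⟩
    simp only [A, Set.mem_ofPred_eq, Real.coe_toNNReal _ hε.le]
    exact h.trans (le_sup' (fun k ↦ f k ω) (mem_range.mpr (Nat.lt_succ_of_le hn)))
  have h_doob : ENNReal.ofReal ε * μ A ≤ ENNReal.ofReal (μ[f N]) :=
    (maximal_ineq hsub hnonneg N).trans (ENNReal.ofReal_le_ofReal
      (setIntegral_le_integral (hsub.integrable N) (Filter.Eventually.of_forall (hnonneg N))))
  rw [ENNReal.ofReal_div_of_pos hε, ENNReal.le_div_iff_mul_le (by simp [hε]) (by simp), mul_comm]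
  exact le_trans (by gcongr) h_doob

namespace ProbabilityTheory

variable {X : ℕ → Ω → ℝ} {c : ℝ≥0}

lemma measure_exists_sum_range_succ_ge_le_exp_of_iIndepFun (h_indep : iIndepFun X μ)
    (hX : ∀ i, Measurable (X i)) (h_subG : ∀ i, HasSubgaussianMGF (X i) c μ) (ε : ℝ) {t : ℝ}
    (ht : 0 ≤ t) (N : ℕ) :
    μ {ω | ∃ n ≤ N, ε ≤ ∑ i ∈ range (n + 1), X i ω}
      ≤ ENNReal.ofReal (exp (-(t * ε) + (N + 1) * c * t ^ 2 / 2)) := by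
  have := h_indep.isProbabilityMeasure
  set Z : ℕ → Ω → ℝ := fun i ω ↦ exp (t * X i ω)
  have hZ : ∀ i, StronglyMeasurable (Z i) := fun i ↦ ((hX i).const_mul t).exp.stronglyMeasurable
  have h_sub : Submartingale (fun n ↦ ∏ i ∈ range (n + 1), Z i) _ μ :=
    (h_indep.comp (fun _ x ↦ exp (t * x)) fun _ ↦ by fun_prop).submartingale_prod_range_succ
      hZ (fun i ↦ (h_subG i).integrable_exp_mul t) (fun i ω ↦ (exp_pos _).le)
      (fun i ↦ (h_subG i).one_le_mgf t)
  have h_prod : ∀ n ω, (∏ i ∈ range (n + 1), Z i) ω = exp (t * ∑ i ∈ range (n + 1), X i ω) := by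
    simp [Z, mul_sum, exp_sum]
  have h_mgf : μ[∏ i ∈ range (N + 1), Z i] ≤ exp ((N + 1) * c * t ^ 2 / 2) := by
    have := (HasSubgaussianMGF.sum_of_iIndepFun h_indep (s := range (N + 1))
      fun i _ ↦ h_subG i).mgf_le t
    simp_rw [h_prod]
    simpa [mgf, mul_assoc] using this
  calc μ {ω | ∃ n ≤ N, ε ≤ ∑ i ∈ range (n + 1), X i ω}
      ≤ μ {ω | ∃ n ≤ N, exp (t * ε) ≤ (∏ i ∈ range (n + 1), Z i) ω} :=
        measure_mono fun ω ⟨n, hn, h⟩ ↦ ⟨n, hn, by rw [h_prod]; gcongr⟩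
    _ ≤ ENNReal.ofReal (μ[∏ i ∈ range (N + 1), Z i] / exp (t * ε)) :=
        h_sub.measure_exists_le_le_integral_div
          (fun n ω ↦ (exp_pos _).le.trans_eq (h_prod n ω).symm) (exp_pos _) N
    _ ≤ ENNReal.ofReal (exp (-(t * ε) + (N + 1) * c * t ^ 2 / 2)) := by
        rw [exp_add, exp_neg, ← div_eq_inv_mul]
        gcongr

theorem measure_exists_sum_range_succ_ge_le_of_iIndepFun (h_indep : iIndepFun X μ)
    (hX : ∀ i, Measurable (X i)) (h_subG : ∀ i, HasSubgaussianMGF (X i) c μ) {ε : ℝ}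
    (hε : 0 ≤ ε) (N : ℕ) :
    μ {ω | ∃ n < N, ε ≤ ∑ i ∈ range (n + 1), X i ω}
      ≤ ENNReal.ofReal (exp (-ε ^ 2 / (2 * N * c))) := by
  have := h_indep.isProbabilityMeasure
  -- If `N * c = 0`, division by zero makes the bound `exp 0 = 1`.
  rcases eq_or_ne ((N : ℝ) * c) 0 with h0 | h0
  · simpa [mul_assoc, h0] using prob_le_one
  obtain ⟨M, rfl⟩ : ∃ M, N = M + 1 := Nat.exists_eq_succ_of_ne_zero (by rintro rfl; simp at h0)
  -- `t = ε / (N c)` minimises the exponent `-t ε + N c t ^ 2 / 2`.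
  convert measure_exists_sum_range_succ_ge_le_exp_of_iIndepFun h_indep hX h_subG ε
    (t := ε / ((M + 1) * c)) (by positivity) M using 3
  · simp
  · push_cast at h0 ⊢
    field_simp
    ring

end ProbabilityTheory

end

lemma hasSum_one_div_nat_add_one_sq :
    HasSum (fun k : ℕ ↦ 1 / ((k : ℝ) + 1) ^ 2) (π ^ 2 / 6) := by
  simpa using (hasSum_nat_add_iff' 1).mpr hasSum_zeta_two

lemma tsum_ofReal_div_nat_add_one_sq_le {a : ℝ} (ha : 0 ≤ a) :
    ∑' k : ℕ, ENNReal.ofReal (a / ((k : ℝ) + 1) ^ 2) ≤ ENNReal.ofReal (2 * a) := by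
  have h_sum : HasSum (fun k : ℕ ↦ a / ((k : ℝ) + 1) ^ 2) (a * (π ^ 2 / 6)) := by
    simpa [div_eq_mul_inv] using hasSum_one_div_nat_add_one_sq.mul_left a
  rw [← ENNReal.ofReal_tsum_of_nonneg (fun _ ↦ by positivity) h_sum.summable, h_sum.tsum_eq]
  have : π ^ 2 / 6 ≤ 2 := by nlinarith [pi_lt_d2, pi_pos]
  exact ENNReal.ofReal_le_ofReal (by nlinarith)

lemma exp_neg_two_mul_log_add_log_div {δ : ℝ} (hδ : 0 < δ) (k : ℕ) :
    exp (-(2 * log ((k : ℝ) + 1) + log (4 / δ))) = δ / 4 / ((k : ℝ) + 1) ^ 2 := by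
  rw [← exp_log (by positivity : 0 < δ / 4 / ((k : ℝ) + 1) ^ 2)]
  congr 1
  rw [log_div four_ne_zero hδ.ne', log_div (by positivity) (by positivity),
    log_div hδ.ne' four_ne_zero, log_pow]
  push_cast
  ring

lemma two_pow_natLog_mul_le {n : ℕ} (hn : n ≠ 0) {D : ℝ} (hD : 0 ≤ D) :
    2 ^ Nat.log 2 n * (2 * log (Nat.log 2 n + 1) + D) ≤ n * (2 * log (logb 2 n + 1) + D) := by
  have h_pow : (2 : ℝ) ^ Nat.log 2 n ≤ n := by exact_mod_cast Nat.pow_log_le_self 2 hn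
  have h_log : log (Nat.log 2 n + 1) ≤ log (logb 2 n + 1) :=
    log_le_log (by positivity) (by have := natLog_le_logb n 2; push_cast at this; linarith)
  have h_nonneg : 0 ≤ log (Nat.log 2 n + 1) := log_nonneg (by simp)
  gcongr

lemma exists_lt_two_pow_sqrt_le_of_sqrt_le_div {s : ℕ → ℝ} {D : ℝ} (hD : 0 ≤ D) {n : ℕ}
    (hn : 1 ≤ n) (h : sqrt ((2 * log (logb 2 n + 1) + D) / n) ≤ s n / n) :
    ∃ k : ℕ, ∃ m < 2 ^ (k + 1), sqrt (2 ^ k * (2 * log ((k : ℝ) + 1) + D)) ≤ s (m + 1) := by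
  have hn_pos : (0 : ℝ) < n := by exact_mod_cast hn
  refine ⟨Nat.log 2 n, n - 1, by have := Nat.lt_pow_succ_log_self one_lt_two n; lia, ?_⟩
  rw [Nat.sub_add_cancel hn]
  calc sqrt (2 ^ Nat.log 2 n * (2 * log (Nat.log 2 n + 1) + D))
      ≤ sqrt (n * (2 * log (logb 2 n + 1) + D)) :=
        sqrt_le_sqrt (two_pow_natLog_mul_le (by omega) hD)
    _ = n * sqrt ((2 * log (logb 2 n + 1) + D) / n) := by
        generalize 2 * log (logb 2 n + 1) + D = E
        nth_rw 2 [← sqrt_sq hn_pos.le]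
        rw [← sqrt_mul (sq_nonneg _), sq, mul_assoc, mul_div_cancel₀ _ hn_pos.ne']
    _ ≤ s n := (le_div_iff₀' hn_pos).mp h

theorem adaptive_hoeffding_inequality
    {Ω : Type*} [MeasureSpace Ω] [IsProbabilityMeasure (ℙ : Measure Ω)]
    (X : ℕ → Ω → ℝ)
    (hmeas : ∀ i, Measurable (X i))
    (hindep : iIndepFun X ℙ)
    (hbound : ∀ i, ∀ᵐ ω, X i ω ∈ Set.Icc (0 : ℝ) 1)
    (δ : ℝ) (hδ : δ ∈ Set.Ioo (0 : ℝ) 1) :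
    ℙ {ω | ∃ n : ℕ, 1 ≤ n ∧
            Real.sqrt ((2 * log (logb 2 n + 1) + log (4 / δ)) / n)
              ≤ (∑ i ∈ Finset.range n, (X i ω - ∫ ω', X i ω' ∂ℙ)) / n}
      ≤ ENNReal.ofReal (δ / 2) := by
  obtain ⟨hδ0, hδ1⟩ := hδ
  set Y : ℕ → Ω → ℝ := fun i ω ↦ X i ω - ∫ ω', X i ω' ∂ℙ
  have hY_indep : iIndepFun Y ℙ :=
    hindep.comp (fun i x ↦ x - ∫ ω', X i ω' ∂ℙ) fun _ ↦ by fun_prop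
  have hY_subG : ∀ i, HasSubgaussianMGF (Y i) (1 / 4) ℙ := fun i ↦ by
    convert hasSubgaussianMGF_of_mem_Icc (hmeas i).aemeasurable (hbound i)
    ext; norm_num
  have hD : 0 ≤ log (4 / δ) := log_nonneg (by rw [le_div_iff₀ hδ0]; linarith)
  set L : ℕ → ℝ := fun k ↦ 2 * log ((k : ℝ) + 1) + log (4 / δ)
  have h_exponent : ∀ k : ℕ,
      -sqrt (2 ^ k * L k) ^ 2 / (2 * ((2 ^ (k + 1) : ℕ) : ℝ) * ((1 / 4 : ℝ≥0) : ℝ)) = -L k := by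
    intro k
    have h_log : 0 ≤ log ((k : ℝ) + 1) := log_nonneg (by simp)
    rw [sq_sqrt (by positivity)]
    push_cast
    field_simp
    ring
  calc _ ≤ ℙ (⋃ k : ℕ,
          {ω | ∃ m < 2 ^ (k + 1), sqrt (2 ^ k * L k) ≤ ∑ i ∈ range (m + 1), Y i ω}) := by
        refine measure_mono fun ω ⟨n, hn, h⟩ ↦ Set.mem_iUnion.mpr ?_
        exact exists_lt_two_pow_sqrt_le_of_sqrt_le_div (s := fun n ↦ ∑ i ∈ range n, Y i ω) hD hn h
    _ ≤ ∑' k : ℕ, ENNReal.ofReal (δ / 4 / ((k : ℝ) + 1) ^ 2) :=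
        (measure_iUnion_le _).trans <| ENNReal.tsum_le_tsum fun k ↦
          (measure_exists_sum_range_succ_ge_le_of_iIndepFun hY_indep
            (fun i ↦ (hmeas i).sub_const _) hY_subG (sqrt_nonneg _) _).trans_eq
            (by rw [h_exponent, exp_neg_two_mul_log_add_log_div hδ0])
    _ ≤ ENNReal.ofReal (δ / 2) :=
        (tsum_ofReal_div_nat_add_one_sq_le (by positivity)).trans_eq (by ring_nf)
end

section
/- Sample-size sufficiency for the adaptive Hoeffding radius: For every δ ∈ (0,1) there exists ε_0 > 0 such that for all ε ∈ (0, ε_0), setting n' = ⌈12(ln(4/δ) + ln ln(1/ε))/ε²⌉, one has (2 ln(log₂(n') + 1) + ln(4/δ))/n' ≤ ε²/4. -/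
open Real

set_option maxHeartbeats 1000000

theorem sample_size_sufficiency_adaptive_hoeffding
    (δ : ℝ) (hδ : δ ∈ Set.Ioo (0 : ℝ) 1) :
    ∃ ε₀ > (0 : ℝ), ∀ ε ∈ Set.Ioo (0 : ℝ) ε₀,
      (2 * log (logb 2 (⌈12 * (log (4 / δ) + log (log (1 / ε))) / ε ^ 2⌉₊ : ℝ) + 1)
          + log (4 / δ))
        / (⌈12 * (log (4 / δ) + log (log (1 / ε))) / ε ^ 2⌉₊ : ℝ)
        ≤ ε ^ 2 / 4 := by
  obtain ⟨hδ0, hδ1⟩ := hδ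
  set L := log (4 / δ) with hLdef
  have hexp1 : Real.exp 1 < 2.7182818286 := Real.exp_one_lt_d9
  have hL1 : 1 < L := by
    rw [hLdef, Real.lt_log_iff_exp_lt (by positivity)]
    have : (4:ℝ) < 4 / δ := by
      rw [lt_div_iff₀ hδ0]; nlinarith
    linarith
  set M := max (2 * log 3 + 2 * log (13 * L + 15) - 2 * L) 1 with hMdef
  have hM1 : 1 ≤ M := le_max_right _ _
  have hMC : 2 * log 3 + 2 * log (13 * L + 15) - 2 * L ≤ M := le_max_left _ _
  refine ⟨exp (-(exp M)), exp_pos _, ?_⟩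
  rintro ε ⟨hε0, hεlt⟩
  set t := log (1/ε) with hTdef
  have ht : exp M < t := by
    have h := Real.log_lt_log hε0 hεlt
    rw [Real.log_exp] at h
    rw [hTdef, one_div, Real.log_inv]
    linarith
  have hexpM1 : Real.exp 1 ≤ Real.exp M := Real.exp_le_exp.mpr hM1
  have ht1 : 1 < t := by nlinarith [Real.add_one_le_exp (1:ℝ)]
  set s := log (log (1/ε)) with hSdef
  have hs : M < s := by
    have h := Real.log_lt_log (Real.exp_pos M) ht
    rwa [Real.log_exp] at h
  have hs1 : 1 < s := lt_of_le_of_lt hM1 hs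
  have hst : s ≤ t := by
    have := Real.log_le_sub_one_of_pos (by linarith : (0:ℝ) < t)
    rw [← hSdef] at this
    linarith
  have hε1 : ε < 1 := by
    have h : Real.exp (-(Real.exp M)) < Real.exp 0 := by
      apply Real.exp_lt_exp.mpr
      have := Real.exp_pos M
      linarith
    rw [Real.exp_zero] at h
    linarith
  have hε2 : ε ^ 2 ≤ 1 := by nlinarith
  have hε2pos : 0 < ε ^ 2 := by positivity
  set x := 12 * (L + s) / ε ^ 2 with hxdef
  have hxpos : 0 < x := by
    apply div_pos (by nlinarith) hε2pos
  set n : ℕ := ⌈x⌉₊ with hndef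
  have hxn : x ≤ (n:ℝ) := Nat.le_ceil x
  have hnx : (n:ℝ) < x + 1 := Nat.ceil_lt_add_one hxpos.le
  have hx12 : (12:ℝ) ≤ x := by
    rw [hxdef, le_div_iff₀ hε2pos]
    nlinarith
  have hn12 : (12:ℝ) ≤ (n:ℝ) := le_trans hx12 hxn
  have hnpos : (0:ℝ) < (n:ℝ) := by linarith
  -- log n > 1
  have hlogn1 : 1 < log (n:ℝ) := by
    rw [Real.lt_log_iff_exp_lt (by linarith)]
    linarith
  -- logb 2 n + 1 ≤ 3 log n
  have hlog2 : (0.6931471803:ℝ) < Real.log 2 := Real.log_two_gt_d9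
  have hlogb : logb 2 (n:ℝ) + 1 ≤ 3 * log (n:ℝ) := by
    have h1 : Real.logb 2 (n:ℝ) ≤ 2 * Real.log (n:ℝ) := by
      rw [Real.logb, div_le_iff₀ (by linarith : (0:ℝ) < Real.log 2)]
      nlinarith
    linarith
  have hlogbpos : 0 < logb 2 (n:ℝ) + 1 := by
    have : 0 ≤ logb 2 (n:ℝ) := Real.logb_nonneg (by norm_num) (by linarith)
    linarith
  -- log (logb 2 n + 1) ≤ log 3 + log (log n)
  have hkey1 : log (logb 2 (n:ℝ) + 1) ≤ log 3 + log (log (n:ℝ)) := by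
    calc log (logb 2 (n:ℝ) + 1) ≤ log (3 * log (n:ℝ)) :=
          Real.log_le_log hlogbpos hlogb
      _ = log 3 + log (log (n:ℝ)) := by
          rw [Real.log_mul (by norm_num) (by linarith)]
  -- n ≤ 13(L+s)/ε²
  have hnub : (n:ℝ) ≤ 13 * (L + s) / ε ^ 2 := by
    have heq : 13 * (L + s) / ε ^ 2 = x + (L + s) / ε ^ 2 := by
      rw [hxdef]; ring
    have h1 : (1:ℝ) ≤ (L + s) / ε ^ 2 := by
      rw [le_div_iff₀ hε2pos, one_mul]; linarith
    linarith
  -- log n ≤ (13L+15) t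
  have hLs15 : (0:ℝ) < 13 * L + 15 := by linarith
  have hlognub : log (n:ℝ) ≤ (13 * L + 15) * t := by
    have h1 : log (n:ℝ) ≤ log (13 * (L + s) / ε ^ 2) :=
      Real.log_le_log hnpos hnub
    have h2 : log (13 * (L + s) / ε ^ 2) = log (13 * (L + s)) - 2 * log ε := by
      rw [Real.log_div (by positivity) (ne_of_gt hε2pos),
        Real.log_pow]
      push_cast
      ring
    have h3 : log (13 * (L + s)) ≤ 13 * (L + s) := by
      have := Real.log_le_sub_one_of_pos (by nlinarith : (0:ℝ) < 13 * (L + s))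
      linarith
    have h4 : -log ε = t := by
      rw [hTdef, one_div, Real.log_inv]
    nlinarith
  -- log (log n) ≤ log(13L+15) + s
  have hkey2 : log (log (n:ℝ)) ≤ log (13 * L + 15) + s := by
    calc log (log (n:ℝ)) ≤ log ((13 * L + 15) * t) :=
          Real.log_le_log (by linarith) hlognub
      _ = log (13 * L + 15) + log t := Real.log_mul (ne_of_gt hLs15) (by linarith)
      _ = log (13 * L + 15) + s := by rw [hSdef, hTdef]
  -- combine
  have hmain : 2 * log (logb 2 (n:ℝ) + 1) + L ≤ 3 * (L + s) := by
    have : log 3 + log (13 * L + 15) + s ≤ L + (3/2) * s := by nlinarith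
    nlinarith
  rw [div_le_iff₀ hnpos]
  have hfx : ε ^ 2 / 4 * x = 3 * (L + s) := by
    rw [hxdef]; field_simp; ring
  have : 3 * (L + s) ≤ ε ^ 2 / 4 * (n:ℝ) := by
    rw [← hfx]
    apply mul_le_mul_of_nonneg_left hxn (by positivity)
  calc 2 * log (logb 2 (n:ℝ) + 1) + L ≤ 3 * (L + s) := hmain
    _ ≤ ε ^ 2 / 4 * (n:ℝ) := this
end
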